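/- arXiv:2410.13362 — 3 statements merged into one kernel-verified Lean document; each statement's English description precedes it below -/
import Mathlib

section
/- For all integers n, k, m, ℓ with k ≥ 1 and ℓ ≥ 1, the quantity A_{(n,k),(m,ℓ)} = −∬_{ℝ²} (1/(x+y)) ψ_{n,−k}(x) ψ_{m,−ℓ}(y) dx dy is strictly positive. -/
open MeasureTheory

/-- The mother Haar wavelet. -/
noncomputable def motherHaar (x : ℝ) : ℝ :=
  if 0 ≤ x ∧ x < 1/2 then 1 else if 1/2 ≤ x ∧ x < 1 then -1 else 0

/-- The Haar wavelet `ψ_{n,k}(x) = 2^{n/2} ψ(2^n x - k)`. -/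
noncomputable def haar (n k : ℤ) (x : ℝ) : ℝ :=
  (2 : ℝ) ^ ((n : ℝ) / 2) * motherHaar ((2 : ℝ) ^ n * x - k)

/-- `A_{(n,k),(m,ℓ)} = -∬ (1/(x+y)) ψ_{n,-k}(x) ψ_{m,-ℓ}(y) dx dy`. -/
noncomputable def Aent (n k m l : ℤ) : ℝ :=
  - ∫ p : ℝ × ℝ, (1 / (p.1 + p.2)) * haar n (-k) p.1 * haar m (-l) p.2

open Set in
lemma oneD_int (a a' : ℝ) :
    IntegrableOn (fun x : ℝ => (-x) ^ (-(1/2) : ℝ)) (Set.Ico a a') := by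
  have h1 : IntervalIntegrable (fun x : ℝ => x ^ (-(1/2) : ℝ)) volume (-a) (-a') :=
    intervalIntegral.intervalIntegrable_rpow' (by norm_num)
  have h2 : IntervalIntegrable (fun x : ℝ => (-x) ^ (-(1/2) : ℝ)) volume a a' := by
    have := (IntervalIntegrable.iff_comp_neg (f := fun x : ℝ => x ^ (-(1/2) : ℝ))
      (a := -a) (b := -a')).1 h1
    simpa using this
  exact IntegrableOn.congr_set_ae h2.1 Ico_ae_eq_Ioc

lemma rect_int (a a' b b' : ℝ) (ha : a' ≤ 0) (hb : b' ≤ 0) :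
    IntegrableOn (fun p : ℝ × ℝ => 1 / (p.1 + p.2)) (Set.Ico a a' ×ˢ Set.Ico b b') := by
  have hM : IntegrableOn
      (fun p : ℝ × ℝ => (-p.1) ^ (-(1/2) : ℝ) * (-p.2) ^ (-(1/2) : ℝ))
      (Set.Ico a a' ×ˢ Set.Ico b b') := by
    have := Integrable.mul_prod (oneD_int a a') (oneD_int b b')
    rwa [Measure.prod_restrict] at this
  have hmeas : AEStronglyMeasurable (fun p : ℝ × ℝ => 1 / (p.1 + p.2))
      (volume.restrict (Set.Ico a a' ×ˢ Set.Ico b b')) := by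
    simp only [one_div]
    exact ((measurable_fst.add measurable_snd).inv).aestronglyMeasurable
  refine hM.integrable.mono hmeas ?_
  rw [ae_restrict_iff' ((measurableSet_Ico).prod (measurableSet_Ico))]
  refine ae_of_all _ fun p hp => ?_
  obtain ⟨⟨_, hx⟩, ⟨_, hy⟩⟩ := hp
  have hx0 : p.1 < 0 := lt_of_lt_of_le hx ha
  have hy0 : p.2 < 0 := lt_of_lt_of_le hy hb
  set u := -p.1 with hu
  set v := -p.2 with hv
  have hu0 : 0 < u := by simp [hu]; linarith
  have hv0 : 0 < v := by simp [hv]; linarith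
  have key : |1 / (p.1 + p.2)| ≤ u ^ (-(1/2) : ℝ) * v ^ (-(1/2) : ℝ) := by
    have h1 : |1 / (p.1 + p.2)| = 1 / (u + v) := by
      rw [abs_div, abs_one]
      congr 1
      rw [abs_of_neg (by linarith)]
      ring
    have h2 : u ^ (-(1/2) : ℝ) * v ^ (-(1/2) : ℝ) = 1 / Real.sqrt (u * v) := by
      rw [← Real.mul_rpow hu0.le hv0.le, Real.rpow_neg (by positivity),
        Real.sqrt_eq_rpow]
      norm_num
    rw [h1, h2]
    have hs : 0 < Real.sqrt (u * v) := Real.sqrt_pos.2 (by positivity)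
    apply one_div_le_one_div_of_le hs
    calc Real.sqrt (u * v) ≤ Real.sqrt ((u + v) ^ 2) := Real.sqrt_le_sqrt (by nlinarith)
      _ = u + v := by rw [Real.sqrt_sq (by positivity)]
  calc ‖1 / (p.1 + p.2)‖ = |1 / (p.1 + p.2)| := rfl
    _ ≤ u ^ (-(1/2) : ℝ) * v ^ (-(1/2) : ℝ) := key
    _ ≤ ‖(-p.1) ^ (-(1/2) : ℝ) * (-p.2) ^ (-(1/2) : ℝ)‖ := by
        rw [Real.norm_eq_abs]
        exact le_abs_self _

set_option maxHeartbeats 1000000 in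
lemma key_pos (a b h g : ℝ) (hh : 0 < h) (hg : 0 < g)
    (ha : a + h + h ≤ 0) (hb : b + g + g ≤ 0) :
    0 < - ∫ p : ℝ × ℝ, (1 / (p.1 + p.2)) *
      ((Set.Ico a (a+h)).indicator 1 p.1 - (Set.Ico (a+h) (a+h+h)).indicator 1 p.1) *
      ((Set.Ico b (b+g)).indicator 1 p.2 - (Set.Ico (b+g) (b+g+g)).indicator 1 p.2) := by
  set f : ℝ × ℝ → ℝ := fun p => 1 / (p.1 + p.2) with hf
  set S1 : Set (ℝ × ℝ) := Set.Ico a (a+h) ×ˢ Set.Ico b (b+g) with hS1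
  set S2 : Set (ℝ × ℝ) := Set.Ico (a+h) (a+h+h) ×ˢ Set.Ico b (b+g) with hS2
  set S3 : Set (ℝ × ℝ) := Set.Ico a (a+h) ×ˢ Set.Ico (b+g) (b+g+g) with hS3
  set S4 : Set (ℝ × ℝ) := Set.Ico (a+h) (a+h+h) ×ˢ Set.Ico (b+g) (b+g+g) with hS4
  have hmS1 : MeasurableSet S1 := (measurableSet_Ico).prod (measurableSet_Ico)
  have hmS2 : MeasurableSet S2 := (measurableSet_Ico).prod (measurableSet_Ico)
  have hmS3 : MeasurableSet S3 := (measurableSet_Ico).prod (measurableSet_Ico)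
  have hmS4 : MeasurableSet S4 := (measurableSet_Ico).prod (measurableSet_Ico)
  have hah : a + h ≤ 0 := by linarith
  have hbg : b + g ≤ 0 := by linarith
  have hI1 : Integrable (S1.indicator f) :=
    (integrable_indicator_iff hmS1).2 (rect_int a (a+h) b (b+g) hah hbg)
  have hI2 : Integrable (S2.indicator f) :=
    (integrable_indicator_iff hmS2).2 (rect_int (a+h) (a+h+h) b (b+g) ha hbg)
  have hI3 : Integrable (S3.indicator f) :=
    (integrable_indicator_iff hmS3).2 (rect_int a (a+h) (b+g) (b+g+g) hah hb)
  have hI4 : Integrable (S4.indicator f) :=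
    (integrable_indicator_iff hmS4).2 (rect_int (a+h) (a+h+h) (b+g) (b+g+g) ha hb)
  -- pointwise expansion
  have expand : ∀ p : ℝ × ℝ, (1 / (p.1 + p.2)) *
      ((Set.Ico a (a+h)).indicator 1 p.1 - (Set.Ico (a+h) (a+h+h)).indicator 1 p.1) *
      ((Set.Ico b (b+g)).indicator 1 p.2 - (Set.Ico (b+g) (b+g+g)).indicator 1 p.2)
      = S1.indicator f p - S2.indicator f p - S3.indicator f p + S4.indicator f p := by
    intro p
    by_cases h1 : p.1 ∈ Set.Ico a (a+h) <;> by_cases h2 : p.1 ∈ Set.Ico (a+h) (a+h+h) <;>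
      by_cases h3 : p.2 ∈ Set.Ico b (b+g) <;> by_cases h4 : p.2 ∈ Set.Ico (b+g) (b+g+g) <;>
      simp [hS1, hS2, hS3, hS4, Set.indicator_apply, Set.mem_prod, h1, h2, h3, h4, hf] <;>
      ring
  -- shift equalities
  have shift2 : (fun p : ℝ × ℝ => S2.indicator f (p + ((h, 0) : ℝ × ℝ)))
      = S1.indicator (fun q => 1 / (q.1 + q.2 + h)) := by
    funext p
    have hmem : p + ((h, 0) : ℝ × ℝ) ∈ S2 ↔ p ∈ S1 := by
      simp only [hS1, hS2, Set.mem_prod, Set.mem_Ico, Prod.fst_add, Prod.snd_add]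
      constructor <;> rintro ⟨⟨u1, u2⟩, u3, u4⟩ <;>
        exact ⟨⟨by linarith, by linarith⟩, by linarith, by linarith⟩
    simp only [Set.indicator_apply, hmem]
    by_cases hp : p ∈ S1
    · simp only [hp, if_true, hf, Prod.fst_add, Prod.snd_add]
      norm_num
      ring_nf
    · simp [hp]
  have shift3 : (fun p : ℝ × ℝ => S3.indicator f (p + ((0, g) : ℝ × ℝ)))
      = S1.indicator (fun q => 1 / (q.1 + q.2 + g)) := by
    funext p
    have hmem : p + ((0, g) : ℝ × ℝ) ∈ S3 ↔ p ∈ S1 := by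
      simp only [hS1, hS3, Set.mem_prod, Set.mem_Ico, Prod.fst_add, Prod.snd_add]
      constructor <;> rintro ⟨⟨u1, u2⟩, u3, u4⟩ <;>
        exact ⟨⟨by linarith, by linarith⟩, by linarith, by linarith⟩
    simp only [Set.indicator_apply, hmem]
    by_cases hp : p ∈ S1
    · simp only [hp, if_true, hf, Prod.fst_add, Prod.snd_add]
      norm_num
      ring_nf
    · simp [hp]
  have shift4 : (fun p : ℝ × ℝ => S4.indicator f (p + ((h, g) : ℝ × ℝ)))
      = S1.indicator (fun q => 1 / (q.1 + q.2 + (h + g))) := by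
    funext p
    have hmem : p + ((h, g) : ℝ × ℝ) ∈ S4 ↔ p ∈ S1 := by
      simp only [hS1, hS4, Set.mem_prod, Set.mem_Ico, Prod.fst_add, Prod.snd_add]
      constructor <;> rintro ⟨⟨u1, u2⟩, u3, u4⟩ <;>
        exact ⟨⟨by linarith, by linarith⟩, by linarith, by linarith⟩
    simp only [Set.indicator_apply, hmem]
    by_cases hp : p ∈ S1
    · simp only [hp, if_true, hf, Prod.fst_add, Prod.snd_add]
      norm_num
      ring_nf
    · simp [hp]
  -- integrability of shifted indicators
  have hJ2 : Integrable (S1.indicator (fun q : ℝ × ℝ => 1 / (q.1 + q.2 + h))) := by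
    rw [← shift2]; exact hI2.comp_add_right _
  have hJ3 : Integrable (S1.indicator (fun q : ℝ × ℝ => 1 / (q.1 + q.2 + g))) := by
    rw [← shift3]; exact hI3.comp_add_right _
  have hJ4 : Integrable (S1.indicator (fun q : ℝ × ℝ => 1 / (q.1 + q.2 + (h + g)))) := by
    rw [← shift4]; exact hI4.comp_add_right _
  -- integral equalities from shifts
  have eint2 : ∫ p : ℝ × ℝ, S2.indicator f p
      = ∫ p : ℝ × ℝ, S1.indicator (fun q => 1 / (q.1 + q.2 + h)) p := by
    rw [← integral_add_right_eq_self (S2.indicator f) ((h, 0) : ℝ × ℝ)]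
    simp_rw [shift2]
  have eint3 : ∫ p : ℝ × ℝ, S3.indicator f p
      = ∫ p : ℝ × ℝ, S1.indicator (fun q => 1 / (q.1 + q.2 + g)) p := by
    rw [← integral_add_right_eq_self (S3.indicator f) ((0, g) : ℝ × ℝ)]
    simp_rw [shift3]
  have eint4 : ∫ p : ℝ × ℝ, S4.indicator f p
      = ∫ p : ℝ × ℝ, S1.indicator (fun q => 1 / (q.1 + q.2 + (h + g))) p := by
    rw [← integral_add_right_eq_self (S4.indicator f) ((h, g) : ℝ × ℝ)]
    simp_rw [shift4]
  -- split the integral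
  have hsplit : (∫ p : ℝ × ℝ, (1 / (p.1 + p.2)) *
      ((Set.Ico a (a+h)).indicator 1 p.1 - (Set.Ico (a+h) (a+h+h)).indicator 1 p.1) *
      ((Set.Ico b (b+g)).indicator 1 p.2 - (Set.Ico (b+g) (b+g+g)).indicator 1 p.2))
      = (∫ p : ℝ × ℝ, S1.indicator f p) - (∫ p : ℝ × ℝ, S2.indicator f p)
        - (∫ p : ℝ × ℝ, S3.indicator f p) + (∫ p : ℝ × ℝ, S4.indicator f p) := by
    rw [show (fun p : ℝ × ℝ => (1 / (p.1 + p.2)) *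
      ((Set.Ico a (a+h)).indicator 1 p.1 - (Set.Ico (a+h) (a+h+h)).indicator 1 p.1) *
      ((Set.Ico b (b+g)).indicator 1 p.2 - (Set.Ico (b+g) (b+g+g)).indicator 1 p.2))
      = (fun p => S1.indicator f p - S2.indicator f p - S3.indicator f p + S4.indicator f p)
      from funext expand]
    have e4' := integral_add ((hI1.sub hI2).sub hI3) hI4
    have e3' := integral_sub (hI1.sub hI2) hI3
    have e2' := integral_sub hI1 hI2
    simp only [Pi.add_apply, Pi.sub_apply] at e4' e3' e2'
    rw [e4', e3', e2']
  rw [hsplit, eint2, eint3, eint4, integral_indicator hmS1, integral_indicator hmS1,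
    integral_indicator hmS1, integral_indicator hmS1]
  -- integrabilities on S1
  have k1 : IntegrableOn f S1 := (integrable_indicator_iff hmS1).1 hI1
  have k2 : IntegrableOn (fun q : ℝ × ℝ => 1 / (q.1 + q.2 + h)) S1 :=
    (integrable_indicator_iff hmS1).1 hJ2
  have k3 : IntegrableOn (fun q : ℝ × ℝ => 1 / (q.1 + q.2 + g)) S1 :=
    (integrable_indicator_iff hmS1).1 hJ3
  have k4 : IntegrableOn (fun q : ℝ × ℝ => 1 / (q.1 + q.2 + (h + g))) S1 :=
    (integrable_indicator_iff hmS1).1 hJ4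
  have hΦint : IntegrableOn (fun q : ℝ × ℝ =>
      1 / (q.1 + q.2 + h) + 1 / (q.1 + q.2 + g) - f q - 1 / (q.1 + q.2 + (h + g))) S1 :=
    ((k2.add k3).sub k1).sub k4
  have ecomb : (∫ p in S1, (1 / (p.1 + p.2 + h) + 1 / (p.1 + p.2 + g) - f p
        - 1 / (p.1 + p.2 + (h + g))))
      = (∫ p in S1, (fun q : ℝ × ℝ => 1 / (q.1 + q.2 + h)) p)
        + (∫ p in S1, (fun q : ℝ × ℝ => 1 / (q.1 + q.2 + g)) p)
        - (∫ p in S1, f p)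
        - (∫ p in S1, (fun q : ℝ × ℝ => 1 / (q.1 + q.2 + (h + g))) p) := by
    have u3 := integral_sub ((k2.add k3).sub k1) k4
    have u2 := integral_sub (k2.add k3) k1
    have u1 := integral_add k2 k3
    simp only [Pi.add_apply, Pi.sub_apply] at u1 u2 u3
    rw [u3, u2, u1]
  -- pointwise positivity on S1
  have hpos : ∀ p ∈ S1, 0 < 1 / (p.1 + p.2 + h) + 1 / (p.1 + p.2 + g) - f p
      - 1 / (p.1 + p.2 + (h + g)) := by
    intro p hp
    simp only [hS1, Set.mem_prod, Set.mem_Ico] at hp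
    obtain ⟨⟨hx1, hx2⟩, hy1, hy2⟩ := hp
    simp only [hf]
    set s := p.1 + p.2 with hsdef
    have hs4 : s + (h + g) < 0 := by linarith
    have hs1 : s < 0 := by linarith
    have hs2 : s + h < 0 := by linarith
    have hs3 : s + g < 0 := by linarith
    have n1 : s ≠ 0 := ne_of_lt hs1
    have n2 : s + h ≠ 0 := ne_of_lt hs2
    have n3 : s + g ≠ 0 := ne_of_lt hs3
    have n4 : s + (h + g) ≠ 0 := ne_of_lt hs4
    have e : 1 / (s + h) + 1 / (s + g) - 1 / s - 1 / (s + (h + g))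
        = (h * g * (-(s + s + h + g))) / ((s * (s + (h + g))) * ((s + h) * (s + g))) := by
      field_simp
      ring
    rw [e]
    apply div_pos
    · exact mul_pos (mul_pos hh hg) (by linarith)
    · exact mul_pos (mul_pos_of_neg_of_neg hs1 hs4) (mul_pos_of_neg_of_neg hs2 hs3)
  -- positivity of the combined set integral
  have epos : 0 < ∫ p in S1, (1 / (p.1 + p.2 + h) + 1 / (p.1 + p.2 + g) - f p
      - 1 / (p.1 + p.2 + (h + g))) := by
    rw [setIntegral_pos_iff_support_of_nonneg_ae
      ((ae_restrict_iff' hmS1).2 (ae_of_all _ fun p hp => (hpos p hp).le)) hΦint]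
    refine lt_of_lt_of_le ?_ (measure_mono (fun p hp => ⟨(hpos p hp).ne', hp⟩))
    have hv : volume S1 = ENNReal.ofReal h * ENNReal.ofReal g := by
      rw [hS1, Measure.volume_eq_prod, Measure.prod_prod, Real.volume_Ico,
        Real.volume_Ico]
      simp
    rw [hv]
    exact ENNReal.mul_pos (ENNReal.ofReal_pos.2 hh).ne' (ENNReal.ofReal_pos.2 hg).ne'
  linarith [ecomb, epos]

lemma motherHaar_comp (t a s x : ℝ) (ht : 0 < t) (hs : t * s = 1/2) :
    motherHaar (t * (x - a)) =
      (Set.Ico a (a + s)).indicator 1 x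
        - (Set.Ico (a + s) (a + s + s)).indicator 1 x := by
  have e1 : (0 ≤ t * (x - a) ∧ t * (x - a) < 1/2) ↔ (a ≤ x ∧ x < a + s) := by
    rw [← hs]
    constructor
    · rintro ⟨h1, h2⟩
      have hx1 : 0 ≤ x - a := nonneg_of_mul_nonneg_right h1 ht
      have hx2 : x - a < s := (mul_lt_mul_iff_right₀ ht).1 h2
      constructor <;> linarith
    · rintro ⟨h1, h2⟩
      have hx2 : x - a < s := by linarith
      exact ⟨mul_nonneg ht.le (by linarith), (mul_lt_mul_iff_right₀ ht).2 hx2⟩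
  have e2 : (1/2 ≤ t * (x - a) ∧ t * (x - a) < 1) ↔ (a + s ≤ x ∧ x < a + s + s) := by
    have h1 : (1 : ℝ) = t * (s + s) := by rw [mul_add, hs]; norm_num
    rw [← hs, h1]
    constructor
    · rintro ⟨h1, h2⟩
      have hx1 : s ≤ x - a := (mul_le_mul_iff_right₀ ht).1 h1
      have hx2 : x - a < s + s := (mul_lt_mul_iff_right₀ ht).1 h2
      constructor <;> linarith
    · rintro ⟨h1, h2⟩
      exact ⟨(mul_le_mul_iff_right₀ ht).2 (by linarith), (mul_lt_mul_iff_right₀ ht).2 (by linarith)⟩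
  simp only [motherHaar, Set.indicator_apply, Set.mem_Ico, Pi.one_apply]
  rw [if_congr e1 rfl rfl, if_congr e2 rfl rfl]
  split_ifs with h1 h2 h2
  · exfalso; linarith [h1.2, h2.1]
  · norm_num
  · norm_num
  · norm_num

/-- For all integers `n, k, m, ℓ` with `k, ℓ ≥ 1`, `A_{(n,k),(m,ℓ)} > 0`. -/
theorem Aent_pos (n k m l : ℤ) (hk : 1 ≤ k) (hl : 1 ≤ l) :
    0 < Aent n k m l := by
  have ht1 : (0:ℝ) < (2:ℝ) ^ n := zpow_pos (by norm_num) n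
  have ht2 : (0:ℝ) < (2:ℝ) ^ m := zpow_pos (by norm_num) m
  have ht1' : ((2:ℝ) ^ n) ≠ 0 := ht1.ne'
  have ht2' : ((2:ℝ) ^ m) ≠ 0 := ht2.ne'
  have hs0 : (0:ℝ) < 1/(2*(2:ℝ)^n) := by positivity
  have hg0 : (0:ℝ) < 1/(2*(2:ℝ)^m) := by positivity
  have hs : (2:ℝ)^n * (1/(2*(2:ℝ)^n)) = 1/2 := by field_simp
  have hg : (2:ℝ)^m * (1/(2*(2:ℝ)^m)) = 1/2 := by field_simp
  have hk1 : (1:ℝ) ≤ (k:ℝ) := by exact_mod_cast hk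
  have hl1 : (1:ℝ) ≤ (l:ℝ) := by exact_mod_cast hl
  have hrw1 : ∀ x : ℝ, haar n (-k) x = (2:ℝ)^((n:ℝ)/2) *
      ((Set.Ico (-((k:ℝ)/(2:ℝ)^n)) (-((k:ℝ)/(2:ℝ)^n) + 1/(2*(2:ℝ)^n))).indicator 1 x
        - (Set.Ico (-((k:ℝ)/(2:ℝ)^n) + 1/(2*(2:ℝ)^n))
            (-((k:ℝ)/(2:ℝ)^n) + 1/(2*(2:ℝ)^n) + 1/(2*(2:ℝ)^n))).indicator 1 x) := by
    intro x
    rw [haar, show (2:ℝ)^n * x - ((-k : ℤ):ℝ) = (2:ℝ)^n * (x - (-((k:ℝ)/(2:ℝ)^n))) by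
      push_cast; field_simp]
    rw [motherHaar_comp _ _ _ _ ht1 hs]
  have hrw2 : ∀ x : ℝ, haar m (-l) x = (2:ℝ)^((m:ℝ)/2) *
      ((Set.Ico (-((l:ℝ)/(2:ℝ)^m)) (-((l:ℝ)/(2:ℝ)^m) + 1/(2*(2:ℝ)^m))).indicator 1 x
        - (Set.Ico (-((l:ℝ)/(2:ℝ)^m) + 1/(2*(2:ℝ)^m))
            (-((l:ℝ)/(2:ℝ)^m) + 1/(2*(2:ℝ)^m) + 1/(2*(2:ℝ)^m))).indicator 1 x) := by
    intro x
    rw [haar, show (2:ℝ)^m * x - ((-l : ℤ):ℝ) = (2:ℝ)^m * (x - (-((l:ℝ)/(2:ℝ)^m))) by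
      push_cast; field_simp]
    rw [motherHaar_comp _ _ _ _ ht2 hg]
  have ha2 : -((k:ℝ)/(2:ℝ)^n) + 1/(2*(2:ℝ)^n) + 1/(2*(2:ℝ)^n) ≤ 0 := by
    have e : -((k:ℝ)/(2:ℝ)^n) + 1/(2*(2:ℝ)^n) + 1/(2*(2:ℝ)^n) = (1-(k:ℝ))/(2:ℝ)^n := by
      field_simp
      ring
    rw [e]
    apply div_nonpos_of_nonpos_of_nonneg <;> linarith
  have hb2 : -((l:ℝ)/(2:ℝ)^m) + 1/(2*(2:ℝ)^m) + 1/(2*(2:ℝ)^m) ≤ 0 := by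
    have e : -((l:ℝ)/(2:ℝ)^m) + 1/(2*(2:ℝ)^m) + 1/(2*(2:ℝ)^m) = (1-(l:ℝ))/(2:ℝ)^m := by
      field_simp
      ring
    rw [e]
    apply div_nonpos_of_nonpos_of_nonneg <;> linarith
  have hdef : Aent n k m l
      = - ∫ p : ℝ × ℝ, (1 / (p.1 + p.2)) * haar n (-k) p.1 * haar m (-l) p.2 := rfl
  have hfun : (fun p : ℝ × ℝ => (1 / (p.1 + p.2)) * haar n (-k) p.1 * haar m (-l) p.2)
      = fun p : ℝ × ℝ => ((2:ℝ)^((n:ℝ)/2) * (2:ℝ)^((m:ℝ)/2)) * ((1 / (p.1 + p.2)) *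
      ((Set.Ico (-((k:ℝ)/(2:ℝ)^n)) (-((k:ℝ)/(2:ℝ)^n) + 1/(2*(2:ℝ)^n))).indicator 1 p.1
        - (Set.Ico (-((k:ℝ)/(2:ℝ)^n) + 1/(2*(2:ℝ)^n))
            (-((k:ℝ)/(2:ℝ)^n) + 1/(2*(2:ℝ)^n) + 1/(2*(2:ℝ)^n))).indicator 1 p.1) *
      ((Set.Ico (-((l:ℝ)/(2:ℝ)^m)) (-((l:ℝ)/(2:ℝ)^m) + 1/(2*(2:ℝ)^m))).indicator 1 p.2
        - (Set.Ico (-((l:ℝ)/(2:ℝ)^m) + 1/(2*(2:ℝ)^m))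
            (-((l:ℝ)/(2:ℝ)^m) + 1/(2*(2:ℝ)^m) + 1/(2*(2:ℝ)^m))).indicator 1 p.2)) :=
    funext fun p => by rw [hrw1, hrw2]; ring
  rw [hdef, hfun, integral_const_mul, ← mul_neg]
  exact mul_pos
    (mul_pos (Real.rpow_pos_of_pos (by norm_num) _) (Real.rpow_pos_of_pos (by norm_num) _))
    (key_pos _ _ _ _ hs0 hg0 ha2 hb2)
end

section
/- Let n, k be integers with k ≥ 1, and let y < 0 be a real number. Then ∫_ℝ ψ_{n,−k}(x)/(x+y) dx = 2^{n/2} J(2^n y − k), where J(x) = ln((1/2 + x)² / (x(1+x))) for x < −1. -/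
open MeasureTheory

/-- The function `J(x) = ln((1/2 + x)² / (x(1+x)))`, considered on `(-∞, -1)`. -/
noncomputable def J (x : ℝ) : ℝ := Real.log ((1/2 + x) ^ 2 / (x * (1 + x)))

set_option linter.unnecessarySeqFocus false in
lemma integral_motherHaar_div (c : ℝ) (hc : c < -1) :
    ∫ u : ℝ, motherHaar u / (u + c) = J c := by
  have h1 : (1:ℝ)/2 + c < 0 := by linarith
  have h2 : 1 + c < 0 := by linarith
  have h3 : c < 0 := by linarith
  have hcont : ∀ a b : ℝ, 0 ≤ a → b ≤ 1 → IntegrableOn (fun u : ℝ => (u + c)⁻¹) (Set.Ico a b) := by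
    intro a b ha hb
    apply (ContinuousOn.integrableOn_Icc ?_).mono_set Set.Ico_subset_Icc_self
    apply ContinuousOn.inv₀ (by fun_prop)
    intro u hu
    simp only [Set.mem_Icc] at hu
    nlinarith [hu.1, hu.2]
  have hdec : ∀ u : ℝ, motherHaar u / (u + c) =
      Set.indicator (Set.Ico (0:ℝ) (1/2)) (fun u => (u + c)⁻¹) u
        - Set.indicator (Set.Ico (1/2:ℝ) 1) (fun u => (u + c)⁻¹) u := by
    intro u
    unfold motherHaar
    rw [Set.indicator_apply, Set.indicator_apply]
    simp only [Set.mem_Ico]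
    split_ifs with hA hB <;> simp [one_div, neg_div] <;> linarith [hA.1, hA.2, hB.1, hB.2]
  have hint1 : Integrable (Set.indicator (Set.Ico (0:ℝ) (1/2)) (fun u => (u + c)⁻¹)) := by
    rw [integrable_indicator_iff measurableSet_Ico]
    exact hcont 0 (1/2) le_rfl (by norm_num)
  have hint2 : Integrable (Set.indicator (Set.Ico (1/2:ℝ) 1) (fun u => (u + c)⁻¹)) := by
    rw [integrable_indicator_iff measurableSet_Ico]
    exact hcont (1/2) 1 (by norm_num) le_rfl
  have key : ∀ a b : ℝ, a ≤ b → 0 ≤ a → b ≤ 1 →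
      ∫ u, Set.indicator (Set.Ico a b) (fun u => (u + c)⁻¹) u = Real.log ((b + c)/(a + c)) := by
    intro a b hab ha hb
    rw [integral_indicator measurableSet_Ico, integral_Ico_eq_integral_Ioo,
      ← integral_Ioc_eq_integral_Ioo, ← intervalIntegral.integral_of_le hab]
    rw [show (fun u : ℝ => (u + c)⁻¹) = fun u : ℝ => (1 : ℝ) / (u + c) by funext u; rw [one_div]]
    rw [intervalIntegral.integral_comp_add_right (fun x : ℝ => 1 / x) c]
    rw [integral_one_div]
    intro h
    rw [Set.mem_uIcc] at h
    rcases h with ⟨h1', h2'⟩ | ⟨h1', h2'⟩ <;> nlinarith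
  have hsum : ∫ u : ℝ, motherHaar u / (u + c) =
      (∫ u, Set.indicator (Set.Ico (0:ℝ) (1/2)) (fun u => (u + c)⁻¹) u)
        - ∫ u, Set.indicator (Set.Ico (1/2:ℝ) 1) (fun u => (u + c)⁻¹) u := by
    rw [← integral_sub hint1 hint2]
    exact integral_congr_ae (Filter.Eventually.of_forall hdec)
  rw [hsum, key 0 (1/2) (by norm_num) le_rfl (by norm_num),
    key (1/2) 1 (by norm_num) (by norm_num) le_rfl, zero_add]
  unfold J
  rw [← Real.log_div (div_ne_zero (ne_of_lt h1) (ne_of_lt h3))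
    (div_ne_zero (ne_of_lt h2) (ne_of_lt h1))]
  congr 1
  field_simp

/-- For integers `n, k` with `k ≥ 1` and real `y < 0`,
`∫ ψ_{n,-k}(x)/(x+y) dx = 2^{n/2} J(2^n y - k)`. -/
theorem integral_haar_div (n k : ℤ) (hk : 1 ≤ k) (y : ℝ) (hy : y < 0) :
    ∫ x : ℝ, haar n (-k) x / (x + y) =
      (2 : ℝ) ^ ((n : ℝ) / 2) * J ((2 : ℝ) ^ n * y - k) := by
  set c : ℝ := (2 : ℝ) ^ n * y - k with hc
  have h2n : (0:ℝ) < (2:ℝ) ^ n := zpow_pos (by norm_num) n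
  have hcneg : c < -1 := by
    have : (2:ℝ) ^ n * y < 0 := mul_neg_of_pos_of_neg h2n hy
    have hk' : (1:ℝ) ≤ (k:ℝ) := by exact_mod_cast hk
    simp only [hc]; linarith
  have step1 : ∀ x : ℝ, haar n (-k) x / (x + y) =
      (2 : ℝ) ^ ((n : ℝ) / 2) *
        ((2:ℝ)^n * (motherHaar ((2:ℝ)^n * x + k) / ((2:ℝ)^n * x + k + c))) := by
    intro x
    unfold haar
    push_cast
    have hkey : (2:ℝ)^n * x + k + c = (2:ℝ)^n * (x + y) := by simp only [hc]; ring
    rw [show (2:ℝ)^n * x - (-(k:ℝ)) = (2:ℝ)^n * x + k by ring, hkey]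
    rcases eq_or_ne (x + y) 0 with h | h
    · simp [h]
    · field_simp
  rw [integral_congr_ae (Filter.Eventually.of_forall step1)]
  rw [integral_const_mul, integral_const_mul]
  have hcomp : ∫ x : ℝ, motherHaar ((2:ℝ)^n * x + k) / ((2:ℝ)^n * x + k + c)
      = |((2:ℝ)^n)⁻¹| • ∫ u : ℝ, motherHaar u / (u + c) := by
    have h1 := MeasureTheory.Measure.integral_comp_mul_left
      (fun u : ℝ => motherHaar (u + k) / (u + k + c)) ((2:ℝ)^n)
    have h2 := MeasureTheory.integral_add_right_eq_self (μ := volume)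
      (fun u : ℝ => motherHaar u / (u + c)) (k : ℝ)
    rw [h1, h2]
  rw [hcomp, integral_motherHaar_div c hcneg]
  rw [abs_of_pos (inv_pos.mpr h2n), smul_eq_mul]
  rw [← mul_assoc ((2:ℝ)^n), mul_inv_cancel₀ (ne_of_gt h2n), one_mul]
end

section
/- For every integer n ≥ 0, the quantity a_n = A_{(0,1),(n,1)} admits the closed form a_n = 2^{−n/2} ( (2^{n+1} − 2^n) ln 2 − 2(2^{n−1}+1) ln(2^{n−1}+1) + 3(2^n+1) ln(2^n+1) − (2^{n+1}+1) ln(2^{n+1}+1) ). -/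
open MeasureTheory

open Set

lemma hw_measurable_motherHaar : Measurable motherHaar := by
  unfold motherHaar
  exact Measurable.ite measurableSet_Ico measurable_const
    (Measurable.ite measurableSet_Ico measurable_const measurable_const)

lemma hw_mh_zero {t : ℝ} (ht : t < 0 ∨ 1 ≤ t) : motherHaar t = 0 := by
  unfold motherHaar
  rcases ht with ht | ht
  · rw [if_neg (by intro h; linarith [h.1]), if_neg (by intro h; linarith [h.1])]
  · rw [if_neg (by intro h; linarith [h.2]), if_neg (by intro h; linarith [h.2])]

lemma hw_mh_bound (t : ℝ) : |motherHaar t| ≤ 1 := by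
  unfold motherHaar
  split_ifs <;> norm_num

lemma hw_haar0 (x : ℝ) : haar 0 (-1) x = motherHaar (x + 1) := by
  unfold haar
  norm_num

lemma hw_haarn (n : ℕ) (y : ℝ) :
    haar (n : ℤ) (-1) y = (2:ℝ) ^ ((n:ℝ)/2) * motherHaar ((2:ℝ) ^ (n:ℤ) * y + 1) := by
  unfold haar
  push_cast [sub_neg_eq_add]
  ring_nf

lemma hw_mh_scaled (N : ℝ) (hN : 0 < N) (y : ℝ) :
    motherHaar (N * y + 1) =
      (if y ∈ Ico (-N⁻¹) (-(N⁻¹/2)) then (1:ℝ) else 0) -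
      (if y ∈ Ico (-(N⁻¹/2)) 0 then (1:ℝ) else 0) := by
  have h1 : N * N⁻¹ = 1 := mul_inv_cancel₀ hN.ne'
  have e1 : (0 ≤ N*y+1 ∧ N*y+1 < 1/2) ↔ y ∈ Ico (-N⁻¹) (-(N⁻¹/2)) := by
    simp only [mem_Ico]
    constructor
    · rintro ⟨a, b⟩; constructor <;> nlinarith
    · rintro ⟨a, b⟩; constructor <;> nlinarith
  have e2 : (1/2 ≤ N*y+1 ∧ N*y+1 < 1) ↔ y ∈ Ico (-(N⁻¹/2)) 0 := by
    simp only [mem_Ico]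
    constructor
    · rintro ⟨a, b⟩; constructor <;> nlinarith
    · rintro ⟨a, b⟩; constructor <;> nlinarith
  unfold motherHaar
  simp only [e1, e2, mem_Ico]
  split_ifs with p q
  · exact absurd q.1 (not_le.2 p.2)
  · norm_num
  · norm_num
  · norm_num

lemma hw_inv_ii (x a b : ℝ) (hx : x < 0) (ha : a ≤ 0) (hb : b ≤ 0) :
    IntervalIntegrable (fun y => (x+y)⁻¹) volume a b := by
  apply ContinuousOn.intervalIntegrable
  apply ContinuousOn.inv₀ ((continuous_const.add continuous_id).continuousOn)
  intro y hy
  have hy' : y ≤ 0 := by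
    rcases le_total a b with h | h
    · rw [Set.uIcc_of_le h] at hy; exact hy.2.trans hb
    · rw [Set.uIcc_of_ge h] at hy; exact hy.2.trans ha
  have : x + y < 0 := by linarith
  exact this.ne

lemma hw_inv_int (x a b : ℝ) (hx : x < 0) (hab : a ≤ b) (hb : b ≤ 0) :
    ∫ y in a..b, (x+y)⁻¹ = Real.log (-(x+b)) - Real.log (-(x+a)) := by
  have h1 : (∫ y in a..b, (x+y)⁻¹) = ∫ t in x+a..x+b, t⁻¹ :=
    intervalIntegral.integral_comp_add_left (fun t : ℝ => t⁻¹) x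
  have hxb : x + b < 0 := by linarith
  have hxa : x + a < 0 := by linarith
  have h0 : (0:ℝ) ∉ Set.uIcc (x+a) (x+b) := by
    rw [Set.uIcc_of_le (by linarith)]
    simp only [Set.mem_Icc]; push_neg; intro h; linarith
  rw [h1, integral_inv h0,
    show (x+b)/(x+a) = -(x+b) / -(x+a) from (neg_div_neg_eq _ _).symm,
    Real.log_div (by linarith) (by linarith)]

lemma hw_ind_integrable (x a b : ℝ) (hx : x < 0) (hb : b ≤ 0) :
    Integrable (Set.indicator (Ico a b) (fun y => (x+y)⁻¹)) volume := by
  apply MeasureTheory.IntegrableOn.integrable_indicator _ measurableSet_Ico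
  apply IntegrableOn.mono_set _ Set.Ico_subset_Icc_self
  apply ContinuousOn.integrableOn_Icc
  apply ContinuousOn.inv₀ ((continuous_const.add continuous_id).continuousOn)
  intro y hy
  have : x + y < 0 := by have := hy.2; linarith
  exact this.ne

lemma hw_ind_int (x a b : ℝ) (hx : x < 0) (hab : a ≤ b) (hb : b ≤ 0) :
    ∫ y, Set.indicator (Ico a b) (fun y => (x+y)⁻¹) y
      = Real.log (-(x+b)) - Real.log (-(x+a)) := by
  rw [MeasureTheory.integral_indicator measurableSet_Ico,
    integral_Ico_eq_integral_Ioo, ← integral_Ioc_eq_integral_Ioo,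
    ← intervalIntegral.integral_of_le hab, hw_inv_int x a b hx hab hb]

lemma hw_log_int_Ioc01 : IntegrableOn Real.log (Ioc (0:ℝ) 1) volume := by
  have hcont : ContinuousOn (fun x : ℝ => x - x * Real.log x) (Icc 0 1) :=
    (continuous_id.sub Real.continuous_mul_log).continuousOn
  have hder : ∀ x ∈ Ioo (0:ℝ) 1, HasDerivAt (fun x : ℝ => x - x * Real.log x)
      (-Real.log x) x := by
    intro x hx
    have h := (hasDerivAt_id x).sub (Real.hasDerivAt_mul_log hx.1.ne')
    exact h.congr_deriv (by ring)
  have hpos : ∀ x ∈ Ioo (0:ℝ) 1, 0 ≤ -Real.log x := fun x hx =>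
    neg_nonneg.2 (Real.log_nonpos hx.1.le hx.2.le)
  have H := intervalIntegral.integrableOn_deriv_of_nonneg hcont hder hpos
  have H2 : IntegrableOn (fun x : ℝ => -(-Real.log x)) (Ioc (0:ℝ) 1) volume := H.neg
  simpa using H2

lemma hw_logii (u v : ℝ) (hu : 0 ≤ u) (huv : u ≤ v) :
    IntervalIntegrable Real.log volume u v := by
  rw [intervalIntegrable_iff_integrableOn_Ioc_of_le huv]
  have top : IntegrableOn Real.log (Ioc (1:ℝ) (max v 1)) volume := by
    apply IntegrableOn.mono_set _ Set.Ioc_subset_Icc_self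
    apply ContinuousOn.integrableOn_Icc
    exact Real.continuousOn_log.mono (fun x hx => by
      have : (1:ℝ) ≤ x := hx.1
      simp only [Set.mem_compl_iff, Set.mem_singleton_iff]
      intro h; rw [h] at this; linarith)
  apply IntegrableOn.mono_set (hw_log_int_Ioc01.union top)
  intro x hx
  rcases le_or_gt x 1 with h1 | h1
  · exact Or.inl ⟨lt_of_le_of_lt hu hx.1, h1⟩
  · exact Or.inr ⟨h1, le_max_of_le_left hx.2⟩

lemma hw_log_integral (u v : ℝ) (hu : 0 ≤ u) (huv : u ≤ v) :
    ∫ x in u..v, Real.log x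
      = (v * Real.log v - v) - (u * Real.log u - u) := by
  apply intervalIntegral.integral_eq_sub_of_hasDeriv_right_of_le huv
    ((Real.continuous_mul_log.sub continuous_id).continuousOn)
  · intro x hx
    have hx0 : x ≠ 0 := (lt_of_le_of_lt hu hx.1).ne'
    have h := (Real.hasDerivAt_mul_log hx0).sub (hasDerivAt_id x)
    have h2 : HasDerivAt (fun x : ℝ => x * Real.log x - x) (Real.log x) x := by
      exact h.congr_deriv (by ring)
    exact h2.hasDerivWithinAt
  · exact hw_logii u v hu huv

lemma hw_log_c_ii (c a b : ℝ) (hc : 0 ≤ c) (hab : a ≤ b) (hb : b ≤ 0) :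
    IntervalIntegrable (fun x => Real.log (c - x)) volume a b := by
  have h := (hw_logii (c - b) (c - a) (by linarith) (by linarith)).comp_sub_left c
  simp only [sub_sub_cancel] at h
  exact h.symm

lemma hw_log_c_int (c a b : ℝ) (hc : 0 ≤ c) (hab : a ≤ b) (hb : b ≤ 0) :
    ∫ x in a..b, Real.log (c - x)
      = ((c-a) * Real.log (c-a) - (c-a)) - ((c-b) * Real.log (c-b) - (c-b)) := by
  have h1 : (∫ x in a..b, Real.log (c - x)) = ∫ x in c-b..c-a, Real.log x :=
    intervalIntegral.integral_comp_sub_left Real.log c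
  rw [h1, hw_log_integral (c-b) (c-a) (by linarith) (by linarith)]

lemma hw_logneg : IntegrableOn (fun x : ℝ => Real.log (0 - x)) (Ico (-1:ℝ) 0) volume := by
  have hcont : ContinuousOn (fun x : ℝ => x + (-x) * Real.log (-x)) (Icc (-1:ℝ) 0) :=
    (continuous_id.add (Real.continuous_mul_log.comp continuous_neg)).continuousOn
  have hder : ∀ x ∈ Ioo (-1:ℝ) 0, HasDerivAt (fun x : ℝ => x + (-x) * Real.log (-x))
      (-Real.log (-x)) x := by
    intro x hx
    have h1 : HasDerivAt (fun x : ℝ => (-x) * Real.log (-x))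
        ((Real.log (-x) + 1) * (-1)) x :=
      (Real.hasDerivAt_mul_log (neg_ne_zero.2 hx.2.ne)).comp x (hasDerivAt_neg x)
    have h := (hasDerivAt_id x).add h1
    exact h.congr_deriv (by ring)
  have hpos : ∀ x ∈ Ioo (-1:ℝ) 0, 0 ≤ -Real.log (-x) := by
    intro x hx
    have h1 : -x ≤ 1 := by linarith [hx.1]
    exact neg_nonneg.2 (Real.log_nonpos (by linarith [hx.2]) h1)
  have H := intervalIntegral.integrableOn_deriv_of_nonneg hcont hder hpos
  have H2 : IntegrableOn (fun x : ℝ => -(-Real.log (-x))) (Ioc (-1:ℝ) 0) volume := H.neg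
  have H3 : IntegrableOn (fun x : ℝ => Real.log (0 - x)) (Ioc (-1:ℝ) 0) volume := by
    simpa [zero_sub] using H2
  rw [integrableOn_Ico_iff_integrableOn_Ioo]
  exact H3.mono_set Set.Ioo_subset_Ioc_self

noncomputable def hwG (s N : ℝ) (x : ℝ) : ℝ :=
  s * (2 * Real.log (N⁻¹/2 - x) - Real.log (N⁻¹ - x) - Real.log (0 - x))

lemma hw_point (N C s x y : ℝ) (hN : 0 < N) :
    (1/(x+y)) * C * (s * motherHaar (N*y+1)) =
      (C*s) * (Set.indicator (Ico (-N⁻¹) (-(N⁻¹/2))) (fun y => (x+y)⁻¹) y -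
               Set.indicator (Ico (-(N⁻¹/2)) 0) (fun y => (x+y)⁻¹) y) := by
  rw [hw_mh_scaled N hN y]
  simp only [Set.indicator_apply]
  split_ifs <;> (simp only [one_div]; ring)

lemma hw_slice (n : ℕ) (x : ℝ) :
    Integrable (fun y => (1/(x+y)) * haar 0 (-1) x * haar (n:ℤ) (-1) y) volume := by
  have hN : (0:ℝ) < (2:ℝ)^(n:ℤ) := by positivity
  set N : ℝ := (2:ℝ)^(n:ℤ) with hNdef
  have hNi : (0:ℝ) < N⁻¹ := by positivity
  rcases lt_or_ge x 0 with hx | hx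
  · have hrw : (fun y => (1/(x+y)) * haar 0 (-1) x * haar (n:ℤ) (-1) y)
        = fun y => (haar 0 (-1) x * ((2:ℝ)^((n:ℝ)/2))) *
            (Set.indicator (Ico (-N⁻¹) (-(N⁻¹/2))) (fun y => (x+y)⁻¹) y -
             Set.indicator (Ico (-(N⁻¹/2)) 0) (fun y => (x+y)⁻¹) y) := by
      funext y
      rw [hw_haarn n y]
      exact hw_point N (haar 0 (-1) x) ((2:ℝ)^((n:ℝ)/2)) x y hN
    rw [hrw]
    exact ((hw_ind_integrable x _ _ hx (by linarith)).sub
      (hw_ind_integrable x _ _ hx le_rfl)).const_mul _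
  · have h0 : haar 0 (-1) x = 0 := by
      rw [hw_haar0]; exact hw_mh_zero (Or.inr (by linarith))
    simp only [h0, mul_zero, zero_mul]
    exact integrable_zero _ _ _

lemma hw_inner (n : ℕ) (x : ℝ) (hx : x < 0) :
    (∫ y, (1/(x+y)) * haar 0 (-1) x * haar (n:ℤ) (-1) y)
      = haar 0 (-1) x * hwG ((2:ℝ)^((n:ℝ)/2)) ((2:ℝ)^(n:ℤ)) x := by
  have hN : (0:ℝ) < (2:ℝ)^(n:ℤ) := by positivity
  set N : ℝ := (2:ℝ)^(n:ℤ) with hNdef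
  have hNi : (0:ℝ) < N⁻¹ := by positivity
  have hrw : (fun y => (1/(x+y)) * haar 0 (-1) x * haar (n:ℤ) (-1) y)
      = fun y => (haar 0 (-1) x * ((2:ℝ)^((n:ℝ)/2))) *
          (Set.indicator (Ico (-N⁻¹) (-(N⁻¹/2))) (fun y => (x+y)⁻¹) y -
           Set.indicator (Ico (-(N⁻¹/2)) 0) (fun y => (x+y)⁻¹) y) := by
    funext y
    rw [hw_haarn n y]
    exact hw_point N (haar 0 (-1) x) ((2:ℝ)^((n:ℝ)/2)) x y hN
  rw [hrw, MeasureTheory.integral_const_mul,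
    MeasureTheory.integral_sub (hw_ind_integrable x _ _ hx (by linarith))
      (hw_ind_integrable x _ _ hx le_rfl),
    hw_ind_int x _ _ hx (by linarith) (by linarith),
    hw_ind_int x _ _ hx (by linarith) le_rfl]
  unfold hwG
  rw [show -(x + -(N⁻¹/2)) = N⁻¹/2 - x by ring, show -(x + -N⁻¹) = N⁻¹ - x by ring,
    show -(x + 0) = 0 - x by ring]
  ring

lemma hw_K (s N x : ℝ) :
    haar 0 (-1) x * hwG s N x =
      Set.indicator (Ico (-1:ℝ) (-(1/2))) (hwG s N) x -
      Set.indicator (Ico (-(1/2):ℝ) 0) (hwG s N) x := by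
  rw [hw_haar0]
  have h := hw_mh_scaled 1 one_pos x
  simp only [one_mul, inv_one] at h
  rw [h]
  simp only [Set.indicator_apply]
  split_ifs <;> ring

lemma hw_meas_haar (m k : ℤ) : Measurable (haar m k) := by
  unfold haar
  exact (hw_measurable_motherHaar.comp
    ((measurable_id.const_mul _).sub measurable_const)).const_mul _

lemma hw_meas_F (n : ℕ) :
    Measurable (fun p : ℝ × ℝ => (1/(p.1+p.2)) * haar 0 (-1) p.1 * haar (n:ℤ) (-1) p.2) := by
  apply Measurable.mul
  · apply Measurable.mul
    · exact measurable_const.div (measurable_fst.add measurable_snd)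
    · exact (hw_meas_haar 0 (-1)).comp measurable_fst
  · exact (hw_meas_haar (n:ℤ) (-1)).comp measurable_snd

lemma hw_F_integrable (n : ℕ) :
    Integrable (fun p : ℝ × ℝ => (1/(p.1+p.2)) * haar 0 (-1) p.1 * haar (n:ℤ) (-1) p.2)
      ((volume : Measure ℝ).prod (volume : Measure ℝ)) := by
  have hN : (0:ℝ) < (2:ℝ)^(n:ℤ) := by positivity
  set N : ℝ := (2:ℝ)^(n:ℤ) with hNdef
  have hNi : (0:ℝ) < N⁻¹ := by positivity
  set s : ℝ := (2:ℝ)^((n:ℝ)/2) with hsdef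
  have hs : (0:ℝ) < s := by positivity
  have hmeas : AEStronglyMeasurable
      (fun p : ℝ × ℝ => (1/(p.1+p.2)) * haar 0 (-1) p.1 * haar (n:ℤ) (-1) p.2)
      ((volume : Measure ℝ).prod (volume : Measure ℝ)) := (hw_meas_F n).aestronglyMeasurable
  refine (MeasureTheory.integrable_prod_iff hmeas).2 ⟨?_, ?_⟩
  · exact Filter.Eventually.of_forall (fun x => hw_slice n x)
  · -- dominate by M
    set M : ℝ → ℝ := Set.indicator (Ico (-1:ℝ) 0)
      (fun x => s * (Real.log (N⁻¹ - x) - Real.log (0 - x))) with hMdef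
    have hMint : Integrable M volume := by
      apply MeasureTheory.IntegrableOn.integrable_indicator _ measurableSet_Ico
      apply Integrable.const_mul
      apply Integrable.sub
      · apply IntegrableOn.mono_set _ Set.Ico_subset_Icc_self
        apply ContinuousOn.integrableOn_Icc
        apply ContinuousOn.log ((continuous_const.sub continuous_id).continuousOn)
        intro x hx
        have : x ≤ 0 := hx.2
        have : 0 < N⁻¹ - x := by linarith
        exact this.ne'
      · exact hw_logneg
    apply MeasureTheory.Integrable.mono' hMint (hmeas.norm.integral_prod_right')
    apply Filter.Eventually.of_forall
    intro x
    by_cases hx : x ∈ Ico (-1:ℝ) 0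
    · have hx0 : x < 0 := hx.2
      rw [hMdef, Set.indicator_of_mem hx]
      have h1 : ‖∫ y, ‖(1/(x+y)) * haar 0 (-1) x * haar (n:ℤ) (-1) y‖‖
          = ∫ y, ‖(1/(x+y)) * haar 0 (-1) x * haar (n:ℤ) (-1) y‖ :=
        Real.norm_of_nonneg (integral_nonneg fun y => norm_nonneg _)
      rw [h1]
      set φ : ℝ → ℝ := fun y => s * (-(Set.indicator (Ico (-N⁻¹) 0) (fun y => (x+y)⁻¹) y))
        with hφdef
      have hφint : Integrable φ volume :=
        ((hw_ind_integrable x _ _ hx0 le_rfl).neg).const_mul s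
      have hpt : ∀ y, ‖(1/(x+y)) * haar 0 (-1) x * haar (n:ℤ) (-1) y‖ ≤ φ y := by
        intro y
        by_cases hy : y ∈ Ico (-N⁻¹) 0
        · have hxy : x + y < 0 := by
            have := hy.2; linarith
          have e1 : |1/(x+y)| = -(x+y)⁻¹ := by
            rw [one_div, abs_of_neg (inv_lt_zero.2 hxy)]
          have e2 : |haar 0 (-1) x| ≤ 1 := by rw [hw_haar0]; exact hw_mh_bound _
          have e3 : |haar (n:ℤ) (-1) y| ≤ s := by
            rw [hw_haarn n y, abs_mul, abs_of_pos hs]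
            calc s * |motherHaar (N * y + 1)| ≤ s * 1 := by
                  exact mul_le_mul_of_nonneg_left (hw_mh_bound _) hs.le
              _ = s := mul_one s
          have hφy : φ y = s * (-(x+y)⁻¹) := by
            rw [hφdef]; simp only [Set.indicator_of_mem hy]
          calc ‖(1/(x+y)) * haar 0 (-1) x * haar (n:ℤ) (-1) y‖
              = |1/(x+y)| * |haar 0 (-1) x| * |haar (n:ℤ) (-1) y| := by
                rw [Real.norm_eq_abs, abs_mul, abs_mul]
            _ ≤ |1/(x+y)| * 1 * s := by
                apply mul_le_mul (mul_le_mul_of_nonneg_left e2 (abs_nonneg _)) e3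
                  (abs_nonneg _) (by positivity)
            _ = φ y := by rw [e1, hφy]; ring
        · have h0 : haar (n:ℤ) (-1) y = 0 := by
            rw [hw_haarn n y]
            have hy' : y < -N⁻¹ ∨ 0 ≤ y := by
              by_contra hc
              push_neg at hc
              exact hy hc
            have : N*y+1 < 0 ∨ 1 ≤ N*y+1 := by
              have h1 : N * N⁻¹ = 1 := mul_inv_cancel₀ hN.ne'
              rcases hy' with h | h
              · left; nlinarith
              · right; nlinarith
            rw [hw_mh_zero this, mul_zero]
          rw [h0, mul_zero, norm_zero, hφdef]
          simp only [Set.indicator_of_notMem hy]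
          simp
      calc (∫ y, ‖(1/(x+y)) * haar 0 (-1) x * haar (n:ℤ) (-1) y‖)
          ≤ ∫ y, φ y := integral_mono (hw_slice n x).norm hφint hpt
        _ = s * (Real.log (N⁻¹ - x) - Real.log (0 - x)) := by
            rw [hφdef, MeasureTheory.integral_const_mul, MeasureTheory.integral_neg,
              hw_ind_int x _ _ hx0 (by linarith) le_rfl,
              show -(x + 0) = 0 - x by ring, show -(x + -N⁻¹) = N⁻¹ - x by ring]
            ring
    · rw [hMdef, Set.indicator_of_notMem hx]
      have h0 : haar 0 (-1) x = 0 := by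
        rw [hw_haar0]
        apply hw_mh_zero
        simp only [Set.mem_Ico] at hx
        push_neg at hx
        rcases lt_or_ge x (-1) with h | h
        · left; linarith
        · right; linarith [hx h]
      simp [h0]

lemma hw_g_eval (s N a b : ℝ) (hN : 0 < N) (hab : a ≤ b) (hb : b ≤ 0) :
    ∫ x in a..b, hwG s N x
      = s * (2 * (((N⁻¹/2 - a) * Real.log (N⁻¹/2 - a) - (N⁻¹/2 - a))
                - ((N⁻¹/2 - b) * Real.log (N⁻¹/2 - b) - (N⁻¹/2 - b)))
           - (((N⁻¹ - a) * Real.log (N⁻¹ - a) - (N⁻¹ - a))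
                - ((N⁻¹ - b) * Real.log (N⁻¹ - b) - (N⁻¹ - b)))
           - (((0 - a) * Real.log (0 - a) - (0 - a))
                - ((0 - b) * Real.log (0 - b) - (0 - b)))) := by
  unfold hwG
  rw [intervalIntegral.integral_const_mul]
  congr 1
  have i1 : IntervalIntegrable (fun x => Real.log (N⁻¹/2 - x)) volume a b :=
    hw_log_c_ii _ _ _ (by positivity) hab hb
  have i2 : IntervalIntegrable (fun x => Real.log (N⁻¹ - x)) volume a b :=
    hw_log_c_ii _ _ _ (by positivity) hab hb
  have i3 : IntervalIntegrable (fun x => Real.log (0 - x)) volume a b :=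
    hw_log_c_ii 0 _ _ le_rfl hab hb
  rw [intervalIntegral.integral_sub ((i1.const_mul 2).sub i2) i3,
    intervalIntegral.integral_sub (i1.const_mul 2) i2,
    intervalIntegral.integral_const_mul,
    hw_log_c_int _ _ _ (by positivity) hab hb,
    hw_log_c_int _ _ _ (by positivity) hab hb,
    hw_log_c_int 0 _ _ le_rfl hab hb]

/-- For every `n ≥ 0`, the quantity `a_n = A_{(0,1),(n,1)}` admits the closed form
`a_n = 2^{-n/2} ((2^{n+1} - 2^n) ln 2 - 2(2^{n-1}+1) ln(2^{n-1}+1)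
  + 3(2^n+1) ln(2^n+1) - (2^{n+1}+1) ln(2^{n+1}+1))`. -/
theorem aSeq_closed_form (n : ℕ) :
    Aent 0 1 (n : ℤ) 1 =
      (2 : ℝ) ^ (-(n : ℝ) / 2) *
        (((2 : ℝ) ^ ((n : ℤ) + 1) - (2 : ℝ) ^ (n : ℤ)) * Real.log 2
          - 2 * ((2 : ℝ) ^ ((n : ℤ) - 1) + 1) * Real.log ((2 : ℝ) ^ ((n : ℤ) - 1) + 1)
          + 3 * ((2 : ℝ) ^ (n : ℤ) + 1) * Real.log ((2 : ℝ) ^ (n : ℤ) + 1)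
          - ((2 : ℝ) ^ ((n : ℤ) + 1) + 1) * Real.log ((2 : ℝ) ^ ((n : ℤ) + 1) + 1)) := by
  have hN : (0:ℝ) < (2:ℝ)^(n:ℤ) := by positivity
  set N : ℝ := (2:ℝ)^(n:ℤ) with hNdef
  set s : ℝ := (2:ℝ)^((n:ℝ)/2) with hsdef
  have hNi : (0:ℝ) < N⁻¹ := by positivity
  unfold Aent
  have heq : (∫ p : ℝ × ℝ, (1/(p.1+p.2)) * haar 0 (-1) p.1 * haar (n:ℤ) (-1) p.2)
      = ∫ x : ℝ, ∫ y : ℝ, (1/(x+y)) * haar 0 (-1) x * haar (n:ℤ) (-1) y :=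
    MeasureTheory.integral_prod _ (hw_F_integrable n)
  rw [heq]
  have h3 : ∀ x : ℝ, (∫ y : ℝ, (1/(x+y)) * haar 0 (-1) x * haar (n:ℤ) (-1) y)
      = Set.indicator (Ico (-1:ℝ) (-(1/2))) (hwG s N) x -
        Set.indicator (Ico (-(1/2):ℝ) 0) (hwG s N) x := by
    intro x
    rcases lt_or_ge x 0 with hx | hx
    · rw [hw_inner n x hx, hw_K ((2:ℝ)^((n:ℝ)/2)) ((2:ℝ)^(n:ℤ)) x, ← hsdef, ← hNdef]
    · have h0 : haar 0 (-1) x = 0 := by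
        rw [hw_haar0]; exact hw_mh_zero (Or.inr (by linarith))
      rw [← hw_K s N x, h0, zero_mul]
      simp only [h0, mul_zero, zero_mul]
      exact integral_zero _ _
  simp only [h3]
  have cont1 : ContinuousOn (hwG s N) (Icc (-1:ℝ) (-(1/2))) := by
    have : ContinuousOn (fun x : ℝ =>
        s * (2 * Real.log (N⁻¹/2 - x) - Real.log (N⁻¹ - x) - Real.log (0 - x)))
        (Icc (-1:ℝ) (-(1/2))) := by
      apply ContinuousOn.mul continuousOn_const
      apply ContinuousOn.sub
      apply ContinuousOn.sub
      · apply ContinuousOn.mul continuousOn_const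
        apply ContinuousOn.log ((continuous_const.sub continuous_id).continuousOn)
        intro x hx
        have hx2 : x ≤ -(1/2) := hx.2
        have : (0:ℝ) < N⁻¹/2 - x := by linarith
        exact this.ne'
      · apply ContinuousOn.log ((continuous_const.sub continuous_id).continuousOn)
        intro x hx
        have hx2 : x ≤ -(1/2) := hx.2
        have : (0:ℝ) < N⁻¹ - x := by linarith
        exact this.ne'
      · apply ContinuousOn.log ((continuous_const.sub continuous_id).continuousOn)
        intro x hx
        have hx2 : x ≤ -(1/2) := hx.2
        have : (0:ℝ) < 0 - x := by linarith
        exact this.ne'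
    exact this
  have int1 : Integrable (Set.indicator (Ico (-1:ℝ) (-(1/2))) (hwG s N)) volume := by
    apply MeasureTheory.IntegrableOn.integrable_indicator _ measurableSet_Ico
    exact (cont1.integrableOn_Icc).mono_set Set.Ico_subset_Icc_self
  have int2 : Integrable (Set.indicator (Ico (-(1/2):ℝ) 0) (hwG s N)) volume := by
    apply MeasureTheory.IntegrableOn.integrable_indicator _ measurableSet_Ico
    have part12 : IntegrableOn
        (fun x : ℝ => 2 * Real.log (N⁻¹/2 - x) - Real.log (N⁻¹ - x))
        (Ico (-(1/2):ℝ) 0) volume := by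
      apply IntegrableOn.mono_set _ Set.Ico_subset_Icc_self
      apply ContinuousOn.integrableOn_Icc
      apply ContinuousOn.sub
      · apply ContinuousOn.mul continuousOn_const
        apply ContinuousOn.log ((continuous_const.sub continuous_id).continuousOn)
        intro x hx
        have hx2 : x ≤ 0 := hx.2
        have : (0:ℝ) < N⁻¹/2 - x := by linarith
        exact this.ne'
      · apply ContinuousOn.log ((continuous_const.sub continuous_id).continuousOn)
        intro x hx
        have hx2 : x ≤ 0 := hx.2
        have : (0:ℝ) < N⁻¹ - x := by linarith
        exact this.ne'
    have part3 : IntegrableOn (fun x : ℝ => Real.log (0 - x)) (Ico (-(1/2):ℝ) 0) volume :=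
      hw_logneg.mono_set (Set.Ico_subset_Ico_left (by norm_num))
    exact ((part12.sub part3).const_mul s)
  rw [MeasureTheory.integral_sub int1 int2,
    MeasureTheory.integral_indicator measurableSet_Ico,
    MeasureTheory.integral_indicator measurableSet_Ico,
    integral_Ico_eq_integral_Ioo, integral_Ico_eq_integral_Ioo,
    ← integral_Ioc_eq_integral_Ioo, ← integral_Ioc_eq_integral_Ioo,
    ← intervalIntegral.integral_of_le (show (-1:ℝ) ≤ -(1/2) by norm_num),
    ← intervalIntegral.integral_of_le (show (-(1/2):ℝ) ≤ 0 by norm_num),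
    hw_g_eval s N (-1) (-(1/2)) hN (by norm_num) (by norm_num),
    hw_g_eval s N (-(1/2)) 0 hN (by norm_num) le_rfl]
  -- scalar endgame
  have hs2 : s = (2:ℝ)^(-(n:ℝ)/2) * N := by
    rw [hsdef, hNdef, ← Real.rpow_intCast 2 (n:ℤ), ← Real.rpow_add two_pos]
    congr 1
    push_cast
    ring
  have h2a : (2:ℝ)^((n:ℤ)+1) = 2*N := by
    rw [hNdef, zpow_add_one₀ (two_ne_zero)]; ring
  have h2b : (2:ℝ)^((n:ℤ)-1) = N/2 := by
    rw [hNdef, zpow_sub_one₀ (two_ne_zero)]; ring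
  rw [h2a, h2b, hs2]
  have hNne : N ≠ 0 := hN.ne'
  have l1 : Real.log (N⁻¹/2 - -1) = Real.log (2*N+1) - Real.log 2 - Real.log N := by
    rw [show N⁻¹/2 - -1 = (2*N+1)/(2*N) by field_simp; ring,
      Real.log_div (by positivity) (by positivity),
      Real.log_mul (by norm_num) hNne]
    ring
  have l2 : Real.log (N⁻¹/2 - -(1/2)) = Real.log (N+1) - Real.log 2 - Real.log N := by
    rw [show N⁻¹/2 - -(1/2) = (N+1)/(2*N) by field_simp; ring,
      Real.log_div (by positivity) (by positivity),
      Real.log_mul (by norm_num) hNne]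
    ring
  have l3 : Real.log (N⁻¹/2 - 0) = -(Real.log 2 + Real.log N) := by
    rw [show N⁻¹/2 - 0 = (2*N)⁻¹ by field_simp; ring,
      Real.log_inv, Real.log_mul (by norm_num) hNne]
  have l4 : Real.log (N⁻¹ - -1) = Real.log (N+1) - Real.log N := by
    rw [show N⁻¹ - -1 = (N+1)/N by field_simp; ring,
      Real.log_div (by positivity) hNne]
  have l5 : Real.log (N⁻¹ - -(1/2)) = Real.log (N+2) - Real.log 2 - Real.log N := by
    rw [show N⁻¹ - -(1/2) = (N+2)/(2*N) by field_simp; ring,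
      Real.log_div (by positivity) (by positivity),
      Real.log_mul (by norm_num) hNne]
    ring
  have l6 : Real.log (N⁻¹ - 0) = -Real.log N := by
    rw [show N⁻¹ - 0 = N⁻¹ by ring, Real.log_inv]
  have l7 : Real.log ((0:ℝ) - -1) = 0 := by norm_num
  have l8 : Real.log ((0:ℝ) - -(1/2)) = -Real.log 2 := by
    rw [show (0:ℝ) - -(1/2) = 2⁻¹ by norm_num, Real.log_inv]
  have l9 : Real.log ((0:ℝ) - 0) = 0 := by
    norm_num
  have lR : Real.log (N/2+1) = Real.log (N+2) - Real.log 2 := by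
    rw [show N/2+1 = (N+2)/2 by ring, Real.log_div (by positivity) (by norm_num)]
  rw [l1, l2, l3, l4, l5, l6, l7, l8, l9, lR]
  field_simp
  ring
end
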